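/- arXiv:1402.1136 — 3 statements merged into one kernel-verified Lean document; each statement's English description precedes it below -/
import Mathlib

section
/- Suppose the forms satisfy [H1]–[H3] with δ = 0 (coercivity), and suppose there is a function ω: ℝ → ℝ₊ such that |a(t;u,v) − a(s;u,v)| ≤ ω(|t−s|)‖u‖_V‖v‖_V for all u, v ∈ V and s, t ∈ [0,τ]. Then for every fixed θ > arctan(M/α) there is a constant c_θ, independent of s, t, such that for all z ∉ S_θ the resolvent difference satisfies ‖(z − A(t))^{−1} − (z − A(s))^{−1}‖_{B(H)} ≤ (c_θ/|z|)·ω(|t−s|). -/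
/- Resolvent-difference estimate (Haak–Ouhabaz, Corollary 2.2): under [H1]–[H3] with
`δ = 0`, if `|a(t;u,v) - a(s;u,v)| ≤ ω(|t-s|)‖u‖_V‖v‖_V`, then for each fixed
`θ > arctan(M/α)` there is `c_θ` with
`‖R(z,A(t)) - R(z,A(s))‖_{B(H)} ≤ (c_θ/|z|) ω(|t-s|)` for all `z ∉ S_θ`, `z ≠ 0`,
uniformly in `s,t ∈ [0,τ]`.

The resolvent is encoded through its graph: `ActsOn J (a t) wt gt` and `z • J wt - gt = x`
express `J wt = R(z, A(t)) x`; similarly at time `s`.  The conclusion bounds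
`‖R(z,A(t))x - R(z,A(s))x‖_H` for every `x ∈ H`. -/

open MeasureTheory Set
open scoped InnerProductSpace ENNReal

noncomputable section

variable {V H : Type*}
  [NormedAddCommGroup V] [InnerProductSpace ℂ V] [CompleteSpace V]
  [NormedAddCommGroup H] [InnerProductSpace ℂ H] [CompleteSpace H]

/-- The open sector `S_θ = {z ∈ ℂ \ {0} : |arg z| < θ}`. -/
def sector (θ : ℝ) : Set ℂ := {z : ℂ | z ≠ 0 ∧ |z.arg| < θ}

/-- `B w v = ⟪g, J v⟫_H` for all `v ∈ V`: `J w ∈ D(A)`, `A (J w) = g`. -/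
def ActsOn (J : V →L[ℂ] H) (B : V →L⋆[ℂ] V →L[ℂ] ℂ) (w : V) (g : H) : Prop :=
  ∀ v : V, B w v = ⟪g, J v⟫_ℂ

/- Testing the resolvent equation `z • J w - g = x` against `w` gives
`conj z * ‖J w‖² - a(w, w) = ⟪x, J w⟫`, and testing the difference of the equations at
times `t` and `s` against `u = w_t - w_s` gives
`conj z * ‖J u‖² - a(t; u, u) = a(t; w_s, u) - a(s; w_s, u)`.
By [H2] and [H3] every value `a(t; u, u)` lies in the closed sector of half-angle
`ψ = arctan (M / α)`, while `conj z * ‖J u‖²` lies outside `S_θ`, so the left-hand sides have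
modulus at least `sin (θ - ψ) |z| ‖J u‖²`; with coercivity they also dominate `α ‖u‖_V²`.
The first identity then gives `‖w_s‖_V² ≲ ‖x‖² / |z|`, the second `‖J u‖² ≲ ω² ‖w_s‖_V² / |z|`. -/

open Real ComplexConjugate

theorem Real.cos_le_cos_of_le_abs {x y : ℝ} (hx₀ : 0 ≤ x) (hxy : x ≤ |y|)
    (hy : |y| ≤ 2 * π - x) : cos y ≤ cos x := by
  rw [← cos_abs y]
  rcases le_total |y| π with h | h
  · exact cos_le_cos_of_nonneg_of_le_pi hx₀ h hxy
  · rw [← cos_two_pi_sub]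
    exact cos_le_cos_of_nonneg_of_le_pi hx₀ (by linarith) (by linarith)

theorem Complex.re_mul_conj_eq_norm_mul_norm_mul_cos (ζ μ : ℂ) :
    (ζ * conj μ).re = ‖ζ‖ * ‖μ‖ * Real.cos (ζ.arg - μ.arg) := by
  rw [Real.cos_sub, Complex.mul_re, Complex.conj_re, Complex.conj_im, ← Complex.norm_mul_cos_arg ζ,
    ← Complex.norm_mul_sin_arg ζ, ← Complex.norm_mul_cos_arg μ, ← Complex.norm_mul_sin_arg μ]
  ring

theorem Complex.abs_arg_le_arctan {m : ℝ} (hm : 0 < m) {μ : ℂ} (h : |μ.im| ≤ m * μ.re) :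
    |μ.arg| ≤ Real.arctan m := by
  rcases eq_or_ne μ 0 with rfl | hμ
  · simpa using (arctan_pos.mpr hm).le
  have hre : 0 < μ.re := by
    by_contra! hre
    have him : μ.im = 0 := abs_nonpos_iff.mp (h.trans (mul_nonpos_of_nonneg_of_nonpos hm.le hre))
    have : μ.re < 0 := hre.lt_of_ne fun h0 => hμ (Complex.ext h0 him)
    nlinarith [abs_nonneg μ.im]
  have harg := abs_lt.mp (Complex.abs_arg_lt_pi_div_two_iff.mpr (Or.inl hre))
  have hratio : |μ.im / μ.re| ≤ m := by rwa [abs_div, abs_of_pos hre, div_le_iff₀ hre]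
  rw [← Real.arctan_tan harg.1 harg.2, Complex.tan_arg, abs_le, ← Real.arctan_neg]
  exact ⟨arctan_mono (abs_le.mp hratio).1, arctan_mono (abs_le.mp hratio).2⟩

theorem abs_im_le_div_mul_re {M α n : ℝ} {μ : ℂ} (hM : 0 ≤ M) (hα : 0 < α)
    (hcoer : α * n ^ 2 ≤ μ.re) (hbdd : ‖μ‖ ≤ M * n * n) : |μ.im| ≤ M / α * μ.re :=
  calc |μ.im| ≤ ‖μ‖ := Complex.abs_im_le_norm μ
    _ ≤ M * n * n := hbdd
    _ = M / α * (α * n ^ 2) := by field_simp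
    _ ≤ M / α * μ.re := by gcongr

theorem conj_mul_ofReal_notMem_sector {θ : ℝ} {z : ℂ} (hz : z ∉ sector θ) {r : ℝ}
    (hr : 0 ≤ r) : conj z * r ∉ sector θ := by
  rcases hr.eq_or_lt with rfl | hr
  · simp [sector]
  rintro ⟨hne, harg⟩
  refine hz ⟨fun h => hne (by simp [h]), ?_⟩
  rw [Complex.arg_mul_real hr, Complex.arg_conj] at harg
  split_ifs at harg <;> simp_all

theorem sin_mul_norm_le_norm_sub_of_notMem_sector {ψ θ : ℝ} (hψθ : ψ ≤ θ) (hθ : θ ≤ π)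
    {ζ μ : ℂ} (hζ : ζ ∉ sector θ) (hμ : |μ.arg| ≤ ψ) : sin (θ - ψ) * ‖ζ‖ ≤ ‖ζ - μ‖ := by
  rcases eq_or_ne ζ 0 with rfl | hζ0
  · simp
  have harg : θ ≤ |ζ.arg| := not_lt.mp fun h => hζ ⟨hζ0, h⟩
  have hcos : cos (ζ.arg - μ.arg) ≤ cos (θ - ψ) := by
    have h₁ := abs_sub_abs_le_abs_sub ζ.arg μ.arg
    have h₂ := abs_sub ζ.arg μ.arg
    exact cos_le_cos_of_le_abs (by linarith) (by linarith)
      (by linarith [Complex.abs_arg_le_pi ζ])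
  have hsq : (sin (θ - ψ) * ‖ζ‖) ^ 2 ≤ ‖ζ - μ‖ ^ 2 := by
    rw [← Complex.normSq_eq_norm_sq, Complex.normSq_sub, Complex.normSq_eq_norm_sq,
      Complex.normSq_eq_norm_sq, Complex.re_mul_conj_eq_norm_mul_norm_mul_cos, mul_pow,
      sin_sq]
    nlinarith [sq_nonneg (‖μ‖ - cos (θ - ψ) * ‖ζ‖),
      mul_le_mul_of_nonneg_left hcos (by positivity : 0 ≤ 2 * ‖ζ‖ * ‖μ‖)]
  exact le_of_sq_le_sq hsq (norm_nonneg _)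

def resolventBound (α ψ θ : ℝ) : ℝ := (1 + sin (θ - ψ)) / (α * sin (θ - ψ) ^ 2)

section Defect

/- In the applications `μ = a(w, w)`, `r = ‖J w‖` and `n = ‖w‖_V`, so that the defect
`conj z * r ^ 2 - μ` is `⟪z • J w - A (J w), J w⟫`. -/
variable {α ψ θ : ℝ} {z μ : ℂ} {r n : ℝ}

theorem sin_sub_pos (hψ : 0 ≤ ψ) (hψθ : ψ < θ) (hθ : θ < π) : 0 < sin (θ - ψ) :=
  sin_pos_of_pos_of_lt_pi (by linarith) (by linarith)

theorem resolventBound_pos (hα : 0 < α) (hψ : 0 ≤ ψ) (hψθ : ψ < θ) (hθ : θ < π) :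
    0 < resolventBound α ψ θ := by
  have := sin_sub_pos hψ hψθ hθ
  unfold resolventBound
  positivity

theorem sin_mul_le_norm_defect (hψθ : ψ ≤ θ) (hθ : θ ≤ π) (hz : z ∉ sector θ)
    (hμ : |μ.arg| ≤ ψ) : sin (θ - ψ) * (‖z‖ * r ^ 2) ≤ ‖conj z * r ^ 2 - μ‖ := by
  simpa [norm_mul, abs_of_nonneg (sq_nonneg r)] using
    sin_mul_norm_le_norm_sub_of_notMem_sector hψθ hθ
      (conj_mul_ofReal_notMem_sector hz (sq_nonneg r)) hμ

theorem sin_mul_coercive_le_norm_defect (hψθ : ψ < θ) (hθ : θ < π) (hz : z ∉ sector θ)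
    (hμ : |μ.arg| ≤ ψ) (hcoer : α * n ^ 2 ≤ μ.re) :
    sin (θ - ψ) * (α * n ^ 2) ≤ (1 + sin (θ - ψ)) * ‖conj z * r ^ 2 - μ‖ := by
  have hσ := sin_sub_pos ((abs_nonneg _).trans hμ) hψθ hθ
  have hre : μ.re ≤ ‖z‖ * r ^ 2 + ‖conj z * r ^ 2 - μ‖ := by
    have h₁ := (neg_le_abs _).trans (Complex.abs_re_le_norm (conj z * r ^ 2 - μ))
    have h₂ : (conj z * r ^ 2).re = z.re * r ^ 2 := by simp [← Complex.ofReal_pow]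
    have h₃ := mul_le_mul_of_nonneg_right (Complex.re_le_norm z) (sq_nonneg r)
    rw [Complex.sub_re, h₂] at h₁
    linarith
  nlinarith [sin_mul_le_norm_defect (r := r) hψθ.le hθ.le hz hμ]

theorem energy_sq_le_resolventBound_of_defect_le {K : ℝ} (hα : 0 < α) (hψθ : ψ < θ)
    (hθ : θ < π) (hz₀ : z ≠ 0) (hz : z ∉ sector θ) (hμ : |μ.arg| ≤ ψ)
    (hcoer : α * n ^ 2 ≤ μ.re) (hK : ‖conj z * r ^ 2 - μ‖ ≤ K * r) :
    n ^ 2 ≤ resolventBound α ψ θ / ‖z‖ * K ^ 2 := by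
  have hσ := sin_sub_pos ((abs_nonneg _).trans hμ) hψθ hθ
  have hz' : 0 < ‖z‖ := norm_pos_iff.mpr hz₀
  set σ := sin (θ - ψ)
  have hp : (σ * ‖z‖ * r) ^ 2 ≤ K * (σ * ‖z‖ * r) := by
    nlinarith [sin_mul_le_norm_defect (r := r) hψθ.le hθ.le hz hμ, mul_nonneg hσ.le hz'.le]
  rw [resolventBound, div_div, div_mul_eq_mul_div, le_div_iff₀ (by positivity)]
  calc n ^ 2 * (α * σ ^ 2 * ‖z‖) = σ * ‖z‖ * (σ * (α * n ^ 2)) := by ring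
    _ ≤ σ * ‖z‖ * ((1 + σ) * ‖conj z * r ^ 2 - μ‖) :=
      mul_le_mul_of_nonneg_left (sin_mul_coercive_le_norm_defect hψθ hθ hz hμ hcoer)
        (by positivity)
    _ ≤ σ * ‖z‖ * ((1 + σ) * (K * r)) := by gcongr
    _ = (1 + σ) * (K * (σ * ‖z‖ * r)) := by ring
    _ ≤ (1 + σ) * K ^ 2 := by gcongr; nlinarith [sq_nonneg (K - σ * ‖z‖ * r)]

theorem sq_le_resolventBound_of_defect_le_energy {K : ℝ} (hα : 0 < α) (hψθ : ψ < θ)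
    (hθ : θ < π) (hz₀ : z ≠ 0) (hz : z ∉ sector θ) (hμ : |μ.arg| ≤ ψ)
    (hcoer : α * n ^ 2 ≤ μ.re) (hK : ‖conj z * r ^ 2 - μ‖ ≤ K * n) :
    r ^ 2 ≤ resolventBound α ψ θ / ‖z‖ * K ^ 2 := by
  have hσ := sin_sub_pos ((abs_nonneg _).trans hμ) hψθ hθ
  have hz' : 0 < ‖z‖ := norm_pos_iff.mpr hz₀
  set σ := sin (θ - ψ)
  have hp : (σ * α * n) ^ 2 ≤ (1 + σ) * K * (σ * α * n) := by
    have h := (sin_mul_coercive_le_norm_defect (r := r) hψθ hθ hz hμ hcoer).trans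
      (mul_le_mul_of_nonneg_left hK (by positivity))
    nlinarith [mul_le_mul_of_nonneg_left h (mul_nonneg hσ.le hα.le)]
  rw [resolventBound, div_div, div_mul_eq_mul_div, le_div_iff₀ (by positivity)]
  calc r ^ 2 * (α * σ ^ 2 * ‖z‖) = σ * α * (σ * (‖z‖ * r ^ 2)) := by ring
    _ ≤ σ * α * ‖conj z * r ^ 2 - μ‖ :=
      mul_le_mul_of_nonneg_left (sin_mul_le_norm_defect hψθ.le hθ.le hz hμ) (by positivity)
    _ ≤ σ * α * (K * n) := by gcongr
    _ = K * (σ * α * n) := by ring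
    _ ≤ (1 + σ) * K ^ 2 := by nlinarith [sq_nonneg ((1 + σ) * K - σ * α * n)]

end Defect

section ActsOn

variable {E F : Type*} [NormedAddCommGroup E] [InnerProductSpace ℂ E]
  [NormedAddCommGroup F] [InnerProductSpace ℂ F] {J : E →L[ℂ] F} {z : ℂ}

theorem ActsOn.conj_mul_sq_sub_apply_self {B : E →L⋆[ℂ] E →L[ℂ] ℂ} {w : E} {g x : F}
    (h : ActsOn J B w g) (hx : z • J w - g = x) :
    conj z * (‖J w‖ : ℂ) ^ 2 - B w w = ⟪x, J w⟫_ℂ := by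
  rw [h w, ← hx, inner_sub_left, inner_smul_left, inner_self_eq_norm_sq_to_K]
  rfl

theorem ActsOn.conj_mul_sq_sub_apply_sub_self {B₁ B₂ : E →L⋆[ℂ] E →L[ℂ] ℂ} {w₁ w₂ : E}
    {g₁ g₂ : F} (h₁ : ActsOn J B₁ w₁ g₁) (h₂ : ActsOn J B₂ w₂ g₂)
    (hg : z • J w₁ - g₁ = z • J w₂ - g₂) :
    conj z * (‖J (w₁ - w₂)‖ : ℂ) ^ 2 - B₁ (w₁ - w₂) (w₁ - w₂)
      = B₁ w₂ (w₁ - w₂) - B₂ w₂ (w₁ - w₂) := by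
  have hdiff : g₁ - g₂ = z • J (w₁ - w₂) := by
    rw [map_sub, smul_sub, sub_eq_sub_iff_sub_eq_sub.mp hg]
  have key : B₁ w₁ (w₁ - w₂) - B₂ w₂ (w₁ - w₂) = conj z * (‖J (w₁ - w₂)‖ : ℂ) ^ 2 := by
    rw [h₁, h₂, ← inner_sub_left, hdiff, inner_smul_left, inner_self_eq_norm_sq_to_K]
    rfl
  have hsplit : B₁ (w₁ - w₂) (w₁ - w₂) = B₁ w₁ (w₁ - w₂) - B₁ w₂ (w₁ - w₂) :=
    congrArg (· (w₁ - w₂)) (map_sub B₁ w₁ w₂)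
  linear_combination -key - hsplit

end ActsOn

theorem resolvent_difference_estimate_general
    (J : V →L[ℂ] H)
    (τ : ℝ)
    (a : ℝ → V →L⋆[ℂ] V →L[ℂ] ℂ)
    (M : ℝ) (hM : 0 < M)
    (hbdd : ∀ t ∈ Icc (0:ℝ) τ, ∀ u v : V, ‖a t u v‖ ≤ M * ‖u‖ * ‖v‖)
    (α : ℝ) (hα : 0 < α)
    (hcoer : ∀ t ∈ Icc (0:ℝ) τ, ∀ u : V, α * ‖u‖ ^ 2 ≤ (a t u u).re)
    (ω : ℝ → ℝ) (hω0 : ∀ r : ℝ, 0 ≤ ω r)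
    (hreg : ∀ s ∈ Icc (0:ℝ) τ, ∀ t ∈ Icc (0:ℝ) τ, ∀ u v : V,
      ‖a t u v - a s u v‖ ≤ ω |t - s| * ‖u‖ * ‖v‖)
    (θ : ℝ) (hθ₁ : Real.arctan (M / α) < θ) (hθ₂ : θ < Real.pi) :
    ∃ cθ : ℝ, 0 < cθ ∧ ∀ s ∈ Icc (0:ℝ) τ, ∀ t ∈ Icc (0:ℝ) τ,
      ∀ z : ℂ, z ≠ 0 → z ∉ sector θ → ∀ x : H,
        ∀ wt : V, ∀ gt : H, ActsOn J (a t) wt gt → z • J wt - gt = x →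
        ∀ ws : V, ∀ gs : H, ActsOn J (a s) ws gs → z • J ws - gs = x →
          ‖J wt - J ws‖ ≤ cθ / ‖z‖ * ω |t - s| * ‖x‖ := by
  have hψ : 0 < Real.arctan (M / α) := Real.arctan_pos.mpr (div_pos hM hα)
  have hsect : ∀ t ∈ Icc (0:ℝ) τ, ∀ u : V, |(a t u u).arg| ≤ Real.arctan (M / α) :=
    fun t ht u => Complex.abs_arg_le_arctan (div_pos hM hα)
      (abs_im_le_div_mul_re hM.le hα (hcoer t ht u) (hbdd t ht u u))
  refine ⟨resolventBound α (Real.arctan (M / α)) θ, resolventBound_pos hα hψ.le hθ₁ hθ₂, ?_⟩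
  intro s hs t ht z hz hzs x wt gt hAt hxt ws gs hAs hxs
  set c := resolventBound α (Real.arctan (M / α)) θ / ‖z‖
  have hws : ‖ws‖ ^ 2 ≤ c * ‖x‖ ^ 2 :=
    energy_sq_le_resolventBound_of_defect_le hα hθ₁ hθ₂ hz hzs (hsect s hs ws) (hcoer s hs ws)
      (by rw [hAs.conj_mul_sq_sub_apply_self hxs]; exact norm_inner_le_norm x (J ws))
  have hu : ‖J (wt - ws)‖ ^ 2 ≤ c * (ω |t - s| * ‖ws‖) ^ 2 :=
    sq_le_resolventBound_of_defect_le_energy hα hθ₁ hθ₂ hz hzs (hsect t ht _) (hcoer t ht _)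
      (by rw [hAt.conj_mul_sq_sub_apply_sub_self hAs (hxt.trans hxs.symm)]
          exact hreg s hs t ht ws (wt - ws))
  have hc : 0 ≤ c := div_nonneg (resolventBound_pos hα hψ.le hθ₁ hθ₂).le (norm_nonneg z)
  rw [← map_sub]
  refine le_of_sq_le_sq ?_ (by have := hω0 |t - s|; positivity)
  calc ‖J (wt - ws)‖ ^ 2 ≤ c * (ω |t - s| * ‖ws‖) ^ 2 := hu
    _ ≤ c * ω |t - s| ^ 2 * (c * ‖x‖ ^ 2) := by rw [mul_pow, ← mul_assoc]; gcongr
    _ = (c * ω |t - s| * ‖x‖) ^ 2 := by ring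

/-- **Resolvent-difference estimate.** -/
theorem resolvent_difference_estimate
    (J : V →L[ℂ] H) (hJinj : Function.Injective J) (hJdense : DenseRange J)
    (τ : ℝ) (hτ : 0 < τ)
    (a : ℝ → V →L⋆[ℂ] V →L[ℂ] ℂ)
    (M : ℝ) (hM : 0 < M)
    (hbdd : ∀ t ∈ Icc (0:ℝ) τ, ∀ u v : V, ‖a t u v‖ ≤ M * ‖u‖ * ‖v‖)
    (α : ℝ) (hα : 0 < α)
    (hcoer : ∀ t ∈ Icc (0:ℝ) τ, ∀ u : V, α * ‖u‖ ^ 2 ≤ (a t u u).re)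
    (ω : ℝ → ℝ) (hω0 : ∀ r : ℝ, 0 ≤ ω r)
    (hreg : ∀ s ∈ Icc (0:ℝ) τ, ∀ t ∈ Icc (0:ℝ) τ, ∀ u v : V,
      ‖a t u v - a s u v‖ ≤ ω |t - s| * ‖u‖ * ‖v‖)
    (θ : ℝ) (hθ₁ : Real.arctan (M / α) < θ) (hθ₂ : θ < Real.pi) :
    ∃ cθ : ℝ, 0 < cθ ∧ ∀ s ∈ Icc (0:ℝ) τ, ∀ t ∈ Icc (0:ℝ) τ,
      ∀ z : ℂ, z ≠ 0 → z ∉ sector θ → ∀ x : H,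
        ∀ wt : V, ∀ gt : H, ActsOn J (a t) wt gt → z • J wt - gt = x →
        ∀ ws : V, ∀ gs : H, ActsOn J (a s) ws gs → z • J ws - gs = x →
          ‖J wt - J ws‖ ≤ cθ / ‖z‖ * ω |t - s| * ‖x‖ :=
  resolvent_difference_estimate_general J τ a M hM hbdd α hα hcoer ω hω0 hreg θ hθ₁ hθ₂
end
end

section
/- Let p ∈ (1,∞), let (t_n) be a dense sequence in [0,1] and (c_n) a summable sequence of positive reals, and define a(t) := 1 + Σ_n c_n |t − t_n|^{−1/p} for t ∈ [0,1]. Then: (i) a ∈ L_q(0,1) for every 1 ≤ q < p, but a ∉ L_p(I) for every nondegenerate subinterval I ⊆ [0,1]; (ii) the solution x(t) = ∫₀ᵗ exp(−∫ₛᵗ a(r) dr) ds of the scalar problem x′(t) + a(t)x(t) = 1, x(0) = 0, satisfies a(t)·x(t) ≥ C·t·a(t) for all t ∈ [0,1], where C = exp(−∫₀¹ a(r) dr) > 0; consequently a·x ∉ L_p(α,β) for any 0 < α < β ≤ 1, so this problem fails maximal L_p-regularity. -/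
/-!
For `q < p` the term `cₙ |t - tₙ|^{-1/p}` has `L_q(0,1)`-norm at most `cₙ` times a constant
independent of `tₙ` (translate to `(-1,1)`), so the series defining `a` converges absolutely in
`L_q` and, taking `q = 1`, almost everywhere. A single term is already not `p`-integrable across
`tₙ`, its `p`-th power being `cₙᵖ |t - tₙ|⁻¹`, and by density every interval contains some `tₙ`.
Since `a ≥ 0`, every `exp(-∫ₛᵗ a)` is at least `C = exp(-∫₀¹ a)`, so `x(t) ≥ C t`. On `(α, β)`
with `α > 0` this gives `a ≤ (C α)⁻¹ a x`, and the datum `f = 1` breaks maximal regularity.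
-/

open MeasureTheory Set
open scoped ENNReal

theorem intervalIntegrable_abs_rpow {r : ℝ} (hr : -1 < r) (a b : ℝ) :
    IntervalIntegrable (fun x => |x| ^ r) volume a b := by
  have of_nonneg : ∀ c, 0 ≤ c → IntervalIntegrable (fun x => |x| ^ r) volume 0 c := by
    intro c hc
    rw [intervalIntegrable_iff_integrableOn_Ioc_of_le hc]
    refine ((intervalIntegrable_iff_integrableOn_Ioc_of_le hc).1
      (intervalIntegral.intervalIntegrable_rpow' hr)).congr_fun (fun x hx => ?_) measurableSet_Ioc
    rw [abs_of_pos hx.1]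
  have from_zero : ∀ c, IntervalIntegrable (fun x => |x| ^ r) volume 0 c := by
    intro c
    rcases le_total 0 c with hc | hc
    · exact of_nonneg c hc
    · rw [IntervalIntegrable.iff_comp_neg, neg_zero]
      simpa only [abs_neg] using of_nonneg (-c) (by linarith)
  exact (from_zero a).symm.trans (from_zero b)

theorem memLp_abs_rpow {r q : ℝ} (hq : 0 < q) (hrq : -1 < r * q) (a b : ℝ) :
    MemLp (fun x => |x| ^ r) (ENNReal.ofReal q) (volume.restrict (Ioc a b)) := by
  have hmeas : Measurable fun x : ℝ => |x| ^ r := by fun_prop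
  rw [← integrable_norm_rpow_iff hmeas.aestronglyMeasurable (by simpa using hq)
    ENNReal.ofReal_ne_top, ENNReal.toReal_ofReal hq.le]
  rcases le_total a b with hab | hab
  · refine ((intervalIntegrable_iff_integrableOn_Ioc_of_le hab).1
      (intervalIntegrable_abs_rpow hrq a b)).congr_fun (fun x _ => ?_) measurableSet_Ioc
    rw [Real.norm_of_nonneg (by positivity), ← Real.rpow_mul (abs_nonneg x)]
  · simp [Ioc_eq_empty_of_le hab]

theorem eLpNorm_abs_sub_rpow_le {t₀ : ℝ} (ht₀ : t₀ ∈ Icc (0 : ℝ) 1) (r : ℝ) (q : ℝ≥0∞) :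
    eLpNorm (fun t => |t - t₀| ^ r) q (volume.restrict (Ioc (0 : ℝ) 1))
      ≤ eLpNorm (fun u => |u| ^ r) q (volume.restrict (Ioc (-1 : ℝ) 1)) := by
  have hshift := (measurePreserving_sub_right volume t₀).restrict_preimage
    (measurableSet_Ioc (a := (-1 : ℝ)) (b := 1))
  rw [preimage_sub_const_Ioc] at hshift
  calc eLpNorm (fun t => |t - t₀| ^ r) q (volume.restrict (Ioc (0 : ℝ) 1))
      ≤ eLpNorm (fun t => |t - t₀| ^ r) q (volume.restrict (Ioc (-1 + t₀) (1 + t₀))) :=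
        eLpNorm_mono_measure _ (Measure.restrict_mono
          (Ioc_subset_Ioc (by linarith [ht₀.2]) (by linarith [ht₀.1])) le_rfl)
    _ = _ := eLpNorm_comp_measurePreserving (g := fun u => |u| ^ r)
      (by fun_prop : Measurable fun u : ℝ => |u| ^ r).aestronglyMeasurable hshift

theorem memLp_tsum_of_tsum_eLpNorm_ne_top {X E ι : Type*} {_ : MeasurableSpace X}
    {μ : Measure X} [NormedAddCommGroup E] [CompleteSpace E] [Countable ι]
    {p : ℝ≥0∞} [Fact (1 ≤ p)] {f : ι → X → E} (hf : ∀ n, AEStronglyMeasurable (f n) μ)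
    (hsum : ∑' n, eLpNorm (f n) p μ ≠ ∞) :
    MemLp (fun x => ∑' n, f n x) p μ := by
  have hmem : ∀ n, MemLp (f n) p μ := fun n =>
    ⟨hf n, (ENNReal.le_tsum n).trans_lt hsum.lt_top⟩
  have hLp : ∑' n, ‖(hmem n).toLp‖ₑ ≠ ∞ := by simpa only [Lp.enorm_toLp] using hsum
  have hcoe : ∀ᵐ x ∂μ, ∀ n, (hmem n).toLp (f n) x = f n x :=
    ae_all_iff.2 fun n => (hmem n).coeFn_toLp
  refine (Lp.memLp _).ae_eq ((Lp.coeFn_tsum hLp).trans ?_)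
  filter_upwards [hcoe] with x hx
  simp only [hx]

theorem not_memLp_abs_sub_rpow_neg_inv {p : ℝ} (hp : 0 < p) {α β t₀ : ℝ} (hαβ : α < β)
    (ht₀ : t₀ ∈ Icc α β) :
    ¬ MemLp (fun t => |t - t₀| ^ (-(1 / p))) (ENNReal.ofReal p) (volume.restrict (Ioc α β)) := by
  intro hmem
  have hint := hmem.integrable_norm_rpow (by simpa using hp) ENNReal.ofReal_ne_top
  rw [ENNReal.toReal_ofReal hp.le] at hint
  have hinv : IntervalIntegrable (fun t => (t - t₀)⁻¹) volume α β := by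
    rw [intervalIntegrable_iff_integrableOn_Ioc_of_le hαβ.le, IntegrableOn,
      ← integrable_norm_iff (by fun_prop)]
    refine hint.congr (ae_of_all _ fun t => ?_)
    show ‖|t - t₀| ^ (-(1 / p))‖ ^ p = ‖(t - t₀)⁻¹‖
    rw [Real.norm_of_nonneg (by positivity), ← Real.rpow_mul (abs_nonneg _),
      neg_mul, one_div_mul_cancel hp.ne', norm_inv, Real.norm_eq_abs, Real.rpow_neg_one]
  rw [intervalIntegrable_sub_inv_iff, uIcc_of_le hαβ.le] at hinv
  exact hinv.elim hαβ.ne (· ht₀)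

theorem exists_mem_Ioo_of_Icc_subset_closure_range {ts : ℕ → ℝ}
    (hdense : Icc (0 : ℝ) 1 ⊆ closure (range ts)) {α β : ℝ} (hα : 0 ≤ α) (hαβ : α < β)
    (hβ : β ≤ 1) : ∃ n, ts n ∈ Ioo α β := by
  have hmid : (α + β) / 2 ∈ closure (range ts) := hdense ⟨by linarith, by linarith⟩
  obtain ⟨_, hmem, n, rfl⟩ :=
    mem_closure_iff.1 hmid (Ioo α β) isOpen_Ioo ⟨by linarith, by linarith⟩
  exact ⟨n, hmem⟩

section SingularSeries

variable {p : ℝ} {ts : ℕ → ℝ} {c : ℕ → ℝ}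

theorem tsum_eLpNorm_mul_abs_sub_rpow_ne_top (hts : ∀ n, ts n ∈ Icc (0 : ℝ) 1)
    (hc : Summable fun n => ‖c n‖) {q : ℝ} (hq : 0 < q) (hqp : q < p) :
    ∑' n, eLpNorm (fun t => c n * |t - ts n| ^ (-(1 / p))) (ENNReal.ofReal q)
      (volume.restrict (Ioc (0 : ℝ) 1)) ≠ ∞ := by
  set K := eLpNorm (fun u => |u| ^ (-(1 / p))) (ENNReal.ofReal q)
    (volume.restrict (Ioc (-1 : ℝ) 1))
  have hK : K ≠ ∞ := by
    refine (memLp_abs_rpow hq ?_ (-1) 1).eLpNorm_ne_top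
    rw [neg_mul, one_div_mul_eq_div, neg_lt_neg_iff, div_lt_one (hq.trans hqp)]
    exact hqp
  have hterm : ∀ n, eLpNorm (fun t => c n * |t - ts n| ^ (-(1 / p))) (ENNReal.ofReal q)
      (volume.restrict (Ioc (0 : ℝ) 1)) ≤ ‖c n‖ₑ * K := fun n =>
    (eLpNorm_const_smul (c n) (fun t => |t - ts n| ^ (-(1 / p))) _ _).trans_le
      (by gcongr; exact eLpNorm_abs_sub_rpow_le (hts n) _ _)
  refine ne_top_of_le_ne_top ?_ (ENNReal.tsum_le_tsum hterm)
  rw [ENNReal.tsum_mul_right]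
  exact ENNReal.mul_ne_top (tsum_enorm_ne_top_iff_summable_norm.2 hc) hK

theorem memLp_tsum_mul_abs_sub_rpow (hts : ∀ n, ts n ∈ Icc (0 : ℝ) 1)
    (hc : Summable fun n => ‖c n‖) {q : ℝ} (hq : 1 ≤ q) (hqp : q < p) :
    MemLp (fun t => ∑' n, c n * |t - ts n| ^ (-(1 / p))) (ENNReal.ofReal q)
      (volume.restrict (Ioc (0 : ℝ) 1)) := by
  have : Fact (1 ≤ ENNReal.ofReal q) := ⟨by simpa using hq⟩
  exact memLp_tsum_of_tsum_eLpNorm_ne_top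
    (fun n => (by fun_prop : Measurable _).aestronglyMeasurable)
    (tsum_eLpNorm_mul_abs_sub_rpow_ne_top hts hc (by linarith) hqp)

theorem ae_summable_mul_abs_sub_rpow (hp : 1 < p) (hts : ∀ n, ts n ∈ Icc (0 : ℝ) 1)
    (hc : Summable fun n => ‖c n‖) :
    ∀ᵐ t ∂(volume.restrict (Ioc (0 : ℝ) 1)),
      Summable fun n => c n * |t - ts n| ^ (-(1 / p)) := by
  have hsum := tsum_eLpNorm_mul_abs_sub_rpow_ne_top hts hc one_pos hp
  rw [ENNReal.ofReal_one] at hsum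
  filter_upwards [summable_norm_of_tsum_eLpNorm_ne_top le_rfl
    (fun n => (by fun_prop : Measurable _).aestronglyMeasurable) hsum] with t ht using ht.of_norm

theorem not_memLp_one_add_tsum_mul_abs_sub_rpow (hp : 1 < p) (hts : ∀ n, ts n ∈ Icc (0 : ℝ) 1)
    (hdense : Icc (0 : ℝ) 1 ⊆ closure (range ts)) (hc : ∀ n, 0 < c n) (hcsum : Summable c)
    {α β : ℝ} (hα : 0 ≤ α) (hαβ : α < β) (hβ : β ≤ 1) :
    ¬ MemLp (fun t => 1 + ∑' n, c n * |t - ts n| ^ (-(1 / p))) (ENNReal.ofReal p)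
      (volume.restrict (Ioc α β)) := by
  obtain ⟨n₀, hn₀⟩ := exists_mem_Ioo_of_Icc_subset_closure_range hdense hα hαβ hβ
  have hterm_nonneg : ∀ t n, 0 ≤ c n * |t - ts n| ^ (-(1 / p)) := fun t n =>
    mul_nonneg (hc n).le (by positivity)
  refine fun hmem => not_memLp_abs_sub_rpow_neg_inv (by linarith) hαβ (Ioo_subset_Icc_self hn₀)
    (hmem.of_le_mul (c := (c n₀)⁻¹) (by fun_prop : Measurable _).aestronglyMeasurable ?_)
  filter_upwards [ae_restrict_of_ae_restrict_of_subset (Ioc_subset_Ioc hα hβ)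
    (ae_summable_mul_abs_sub_rpow hp hts hcsum.norm)] with t hsum
  have hle : c n₀ * |t - ts n₀| ^ (-(1 / p)) ≤ 1 + ∑' n, c n * |t - ts n| ^ (-(1 / p)) := by
    linarith [hsum.le_tsum n₀ fun n _ => hterm_nonneg t n]
  rw [Real.norm_of_nonneg (by positivity), Real.norm_of_nonneg (by linarith [hterm_nonneg t n₀]),
    inv_mul_eq_div, le_div_iff₀ (hc n₀), mul_comm]
  exact hle

end SingularSeries

theorem exp_neg_integral_mul_le_integral_exp_neg {a : ℝ → ℝ}
    (ha : 0 ≤ᵐ[volume.restrict (Ioc (0 : ℝ) 1)] a) (hint : IntervalIntegrable a volume 0 1)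
    {t : ℝ} (ht : t ∈ Icc (0 : ℝ) 1) :
    Real.exp (-∫ r in (0 : ℝ)..1, a r) * t ≤ ∫ s in (0 : ℝ)..t, Real.exp (-∫ r in s..t, a r) := by
  have hexp_ge : ∀ s ∈ Icc 0 t,
      Real.exp (-∫ r in (0 : ℝ)..1, a r) ≤ Real.exp (-∫ r in s..t, a r) := fun s hs => by
    gcongr
    exact intervalIntegral.integral_mono_interval hs.1 hs.2 ht.2 ha hint
  have hcont : ContinuousOn (fun s => ∫ r in s..t, a r) (Icc 0 t) := by
    have hint_t : IntervalIntegrable a volume 0 t :=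
      hint.mono_set (uIcc_subset_uIcc_left (by simp [uIcc_of_le, ht.1, ht.2]))
    simpa [uIcc_of_le ht.1] using intervalIntegral.continuousOn_primitive_interval_left
      ((intervalIntegrable_iff').1 hint_t)
  have hexp_int : IntervalIntegrable (fun s => Real.exp (-∫ r in s..t, a r)) volume 0 t :=
    ((hcont.neg).rexp).intervalIntegrable_of_Icc ht.1
  simpa [mul_comm] using
    intervalIntegral.integral_mono_on ht.1 intervalIntegrable_const hexp_int hexp_ge

theorem not_memLp_mul_of_linear_lower_bound {a x : ℝ → ℝ} {C α β : ℝ} {q : ℝ≥0∞}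
    (hC : 0 < C) (hα : 0 < α) (ha : ∀ t ∈ Ioc α β, 0 ≤ a t)
    (hle : ∀ t ∈ Ioc α β, C * t * a t ≤ a t * x t)
    (hmeas : AEStronglyMeasurable a (volume.restrict (Ioc α β)))
    (hnot : ¬ MemLp a q (volume.restrict (Ioc α β))) :
    ¬ MemLp (fun t => a t * x t) q (volume.restrict (Ioc α β)) := by
  refine fun hmem => hnot (hmem.of_le_mul (c := (C * α)⁻¹) hmeas ?_)
  filter_upwards [ae_restrict_mem measurableSet_Ioc] with t ht
  have hCα : 0 < C * α := mul_pos hC hα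
  calc ‖a t‖ = (C * α)⁻¹ * (C * α * a t) := by
        rw [Real.norm_of_nonneg (ha t ht), inv_mul_cancel_left₀ hCα.ne']
    _ ≤ (C * α)⁻¹ * (a t * x t) := by
        have hlin : C * α * a t ≤ C * t * a t := by gcongr; exacts [ha t ht, ht.1.le]
        exact mul_le_mul_of_nonneg_left (hlin.trans (hle t ht)) (inv_nonneg.2 hCα.le)
    _ ≤ (C * α)⁻¹ * ‖a t * x t‖ := by gcongr; exact Real.le_norm_self _

/-- **The scalar problem `x' + a x = 1`, `x(0)=0`, with
`a(t) = 1 + ∑ₙ cₙ |t-tₙ|^{-1/p}`, fails maximal `L_p`-regularity.** -/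
theorem scalar_counterexample_maximal_Lp_regularity_fails
    (p : ℝ) (hp : 1 < p)
    (ts : ℕ → ℝ) (hts : ∀ n, ts n ∈ Icc (0:ℝ) 1)
    (htsdense : Icc (0:ℝ) 1 ⊆ closure (Set.range ts))
    (c : ℕ → ℝ) (hc : ∀ n, 0 < c n) (hcsum : Summable c)
    (a : ℝ → ℝ) (ha : ∀ t, a t = 1 + ∑' n, c n * |t - ts n| ^ (-(1/p)))
    (x : ℝ → ℝ) (hx : ∀ t, x t = ∫ s in (0:ℝ)..t, Real.exp (-∫ r in s..t, a r)) :
    -- (i): `a ∈ L_q(0,1)` for every `1 ≤ q < p` …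
    (∀ q : ℝ, 1 ≤ q → q < p →
      MemLp a (ENNReal.ofReal q) (volume.restrict (Ioc (0:ℝ) 1))) ∧
    -- … but `a ∉ L_p(I)` for every nondegenerate subinterval `I ⊆ [0,1]`
    (∀ α β : ℝ, 0 ≤ α → α < β → β ≤ 1 →
      ¬ MemLp a (ENNReal.ofReal p) (volume.restrict (Ioc α β))) ∧
    -- (ii): `a(t) x(t) ≥ C t a(t)` on `[0,1]` with `C = exp(-∫₀¹ a) > 0`
    (∀ t ∈ Icc (0:ℝ) 1,
      Real.exp (-∫ r in (0:ℝ)..1, a r) * t * a t ≤ a t * x t) ∧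
    -- consequently `a·x ∉ L_p(α,β)` for any `0 < α < β ≤ 1` …
    (∀ α β : ℝ, 0 < α → α < β → β ≤ 1 →
      ¬ MemLp (fun t => a t * x t) (ENNReal.ofReal p) (volume.restrict (Ioc α β))) ∧
    -- … so the problem `x' + a x = f`, `x(0) = 0` fails maximal `L_p`-regularity
    ¬ (∀ f : ℝ → ℝ, MemLp f (ENNReal.ofReal p) (volume.restrict (Ioc (0:ℝ) 1)) →
        MemLp (fun t => a t * ∫ s in (0:ℝ)..t, f s * Real.exp (-∫ r in s..t, a r))
          (ENNReal.ofReal p) (volume.restrict (Ioc (0:ℝ) 1))) := by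
  have ha_eq : a = fun t => 1 + ∑' n, c n * |t - ts n| ^ (-(1/p)) := funext ha
  have ha_nonneg : ∀ t, 0 ≤ a t := fun t => by
    rw [ha t]
    exact add_nonneg zero_le_one (tsum_nonneg fun n => mul_nonneg (hc n).le (by positivity))
  have hLq : ∀ q : ℝ, 1 ≤ q → q < p →
      MemLp a (ENNReal.ofReal q) (volume.restrict (Ioc (0:ℝ) 1)) := fun q hq hqp => by
    rw [ha_eq]
    exact (memLp_const (1 : ℝ)).add (memLp_tsum_mul_abs_sub_rpow hts hcsum.norm hq hqp)
  have hnotLp : ∀ α β : ℝ, 0 ≤ α → α < β → β ≤ 1 →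
      ¬ MemLp a (ENNReal.ofReal p) (volume.restrict (Ioc α β)) := fun α β hα hαβ hβ => by
    rw [ha_eq]; exact not_memLp_one_add_tsum_mul_abs_sub_rpow hp hts htsdense hc hcsum hα hαβ hβ
  have hL1 : IntegrableOn a (Ioc (0:ℝ) 1) := by
    simpa [memLp_one_iff_integrable, IntegrableOn] using hLq 1 le_rfl hp
  have hlower : ∀ t ∈ Icc (0:ℝ) 1,
      Real.exp (-∫ r in (0:ℝ)..1, a r) * t * a t ≤ a t * x t := fun t ht => by
    rw [hx t, mul_comm (a t)]
    exact mul_le_mul_of_nonneg_right (exp_neg_integral_mul_le_integral_exp_neg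
      (ae_of_all _ ha_nonneg)
      ((intervalIntegrable_iff_integrableOn_Ioc_of_le zero_le_one).2 hL1) ht) (ha_nonneg t)
  have hnotLp_mul : ∀ α β : ℝ, 0 < α → α < β → β ≤ 1 →
      ¬ MemLp (fun t => a t * x t) (ENNReal.ofReal p) (volume.restrict (Ioc α β)) :=
    fun α β hα hαβ hβ => not_memLp_mul_of_linear_lower_bound (Real.exp_pos _) hα
      (fun t _ => ha_nonneg t) (fun t ht => hlower t ⟨hα.le.trans ht.1.le, ht.2.trans hβ⟩)
      (hL1.1.mono_measure (Measure.restrict_mono (Ioc_subset_Ioc hα.le hβ) le_rfl))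
      (hnotLp α β hα.le hαβ hβ)
  refine ⟨hLq, hnotLp, hlower, hnotLp_mul, fun hmaxreg => ?_⟩
  have hone := hmaxreg (fun _ => 1) (memLp_const 1)
  simp only [one_mul, ← hx] at hone
  exact hnotLp_mul (1/2) 1 (by norm_num) (by norm_num) le_rfl
    (hone.mono_measure (Measure.restrict_mono (Ioc_subset_Ioc (by norm_num) le_rfl) le_rfl))
end

section
/- Let p ∈ (1,∞), let (t_n) be a dense sequence in [0,1] and (c_n) a summable sequence of positive reals, and define a(t) := 1 + Σ_n c_n |t − t_n|^{−1/p} for t ∈ [0,1]. Fix 1 ≤ q < p. Then for every f ∈ L_q(0,1), the solution x_f(t) = ∫₀ᵗ f(s) exp(−∫ₛᵗ a(r) dr) ds of x′(t) + a(t)x(t) = f(t), x(0) = 0, satisfies the pointwise bound |a(t)·x_f(t)| ≤ C·a(t)·‖f‖_{L_q(0,1)} for all t ∈ [0,1] and some constant C independent of f; since a ∈ L_q(0,1), it follows that a·x_f ∈ L_q(0,1), i.e. the problem x′ + a x = f, x(0) = 0 has maximal L_q-regularity. -/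
/-!
Since `a ≥ 0`, the kernel `exp (-∫ₛᵗ a)` is at most `1`, so
`|x_f(t)| ≤ ‖f‖_{L¹(0,1)} ≤ ‖f‖_{L_q(0,1)}` and the pointwise bound holds with `C = 1`.
Each summand of `a` is a translate of `|x|^{-1/p}`, whose `q`-th power is integrable near `0`
because `q/p < 1`; the `L_q(0,1)` norms of the summands are therefore bounded uniformly in `n`,
and the series defining `a` converges in `L_q(0,1)`. Finally `x_f(t) = e^{-A(t)} ∫₀ᵗ f e^{A}`
with `A` a primitive of `a`, so `x_f` is continuous, hence lies in `L_∞(0,1)`, and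
`a · x_f ∈ L_q(0,1)`.
-/

open MeasureTheory Set
open scoped ENNReal

namespace MeasureTheory

theorem MemLp.tsum {X E ι : Type*} {_ : MeasurableSpace X} {μ : Measure X}
    [NormedAddCommGroup E] [CompleteSpace E] [Countable ι] {p : ℝ≥0∞} (hp : 1 ≤ p)
    {f : ι → X → E} (hf : ∀ n, MemLp (f n) p μ)
    (hsum : ∑' n, eLpNorm (f n) p μ ≠ ∞) :
    MemLp (fun x ↦ ∑' n, f n x) p μ := by
  have : Fact (1 ≤ p) := ⟨hp⟩
  have hsum' : ∑' n, ‖(hf n).toLp (f n)‖ₑ ≠ ∞ := by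
    simpa only [Lp.enorm_toLp] using hsum
  refine (Lp.memLp (∑' n, (hf n).toLp (f n))).ae_eq ?_
  filter_upwards [Lp.coeFn_tsum hsum', ae_all_iff.2 fun n ↦ (hf n).coeFn_toLp] with x hx hfx
  rw [hx]
  exact tsum_congr hfx

theorem integral_norm_le_toReal_eLpNorm {X E : Type*} {_ : MeasurableSpace X} {μ : Measure X}
    [IsProbabilityMeasure μ] [NormedAddCommGroup E] {q : ℝ≥0∞} (hq : 1 ≤ q) {f : X → E}
    (hf : MemLp f q μ) : ∫ x, ‖f x‖ ∂μ ≤ (eLpNorm f q μ).toReal := by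
  rw [← lpNorm_one_eq_integral_norm hf.1, ← toReal_eLpNorm hf.1]
  exact ENNReal.toReal_mono hf.2.ne (eLpNorm_le_eLpNorm_of_exponent_le hq hf.1)

theorem MemLp.integrableOn_Icc {E : Type*} [NormedAddCommGroup E] {q : ℝ≥0∞} (hq : 1 ≤ q)
    {f : ℝ → E} {a b : ℝ} (hf : MemLp f q (volume.restrict (Ioc a b))) :
    IntegrableOn f (Icc a b) :=
  Iff.mpr integrableOn_Icc_iff_integrableOn_Ioc
    (memLp_one_iff_integrable.1 (hf.mono_exponent hq))

end MeasureTheory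

theorem eLpNorm_restrict_comp_sub_le {E : Type*} [NormedAddCommGroup E] {p : ℝ≥0∞}
    {f : ℝ → E} {s t : Set ℝ} {u : ℝ} (ht : MeasurableSet t) (hst : s ⊆ (· - u) ⁻¹' t)
    (hf : AEStronglyMeasurable f (volume.restrict t)) :
    eLpNorm (fun x ↦ f (x - u)) p (volume.restrict s) ≤ eLpNorm f p (volume.restrict t) :=
  calc eLpNorm (fun x ↦ f (x - u)) p (volume.restrict s)
      ≤ eLpNorm (fun x ↦ f (x - u)) p (volume.restrict ((· - u) ⁻¹' t)) :=
        eLpNorm_mono_measure _ (Measure.restrict_mono hst le_rfl)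
    _ = eLpNorm f p (volume.restrict t) :=
        eLpNorm_comp_measurePreserving hf
          ((measurePreserving_sub_right volume u).restrict_preimage ht)

theorem integrableOn_abs_rpow_neg {r : ℝ} (hr : r < 1) {K : Set ℝ} (hK : IsCompact K) :
    IntegrableOn (fun x : ℝ ↦ |x| ^ (-r)) K := by
  refine (locallyIntegrable_of_norm_le_rpow (μ := volume) (C := 1) (α := r) (by simp) (by simpa)
    (.of_forall fun x ↦ ?_)
    (measurable_id.abs.pow_const _).aestronglyMeasurable).integrableOn_isCompact hK
  simp [Real.norm_eq_abs, abs_of_nonneg (Real.rpow_nonneg (abs_nonneg x) _)]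

theorem memLp_abs_rpow_neg {r q : ℝ} (hq : 0 < q) (hrq : r * q < 1) {K : Set ℝ}
    (hK : IsCompact K) :
    MemLp (fun x : ℝ ↦ |x| ^ (-r)) (ENNReal.ofReal q) (volume.restrict K) := by
  have hmeas : AEStronglyMeasurable (fun x : ℝ ↦ |x| ^ (-r)) (volume.restrict K) :=
    (measurable_id.abs.pow_const _).aestronglyMeasurable
  rw [← integrable_norm_rpow_iff hmeas (by simpa using hq) ENNReal.ofReal_ne_top,
    ENNReal.toReal_ofReal hq.le]
  refine (integrableOn_abs_rpow_neg hrq hK).congr_fun (fun x _ ↦ ?_) hK.measurableSet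
  rw [Real.norm_eq_abs, abs_of_nonneg (Real.rpow_nonneg (abs_nonneg x) _),
    ← Real.rpow_mul (abs_nonneg x), neg_mul]

theorem eLpNorm_abs_sub_rpow_neg_le {r : ℝ} {q : ℝ≥0∞} {u : ℝ}
    (hu : u ∈ Icc (0:ℝ) 1) :
    eLpNorm (fun t ↦ |t - u| ^ (-r)) q (volume.restrict (Ioc 0 1)) ≤
      eLpNorm (fun x : ℝ ↦ |x| ^ (-r)) q (volume.restrict (Icc (-1) 1)) :=
  eLpNorm_restrict_comp_sub_le (f := fun x : ℝ ↦ |x| ^ (-r)) measurableSet_Icc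
    (fun t ht ↦ show t - u ∈ Icc (-1) 1 from
      ⟨by linarith [ht.1, hu.2], by linarith [ht.2, hu.1]⟩)
    (measurable_id.abs.pow_const _).aestronglyMeasurable

theorem memLp_tsum_mul_of_eLpNorm_le {X ι : Type*} {_ : MeasurableSpace X} {μ : Measure X}
    [Countable ι] {p : ℝ≥0∞} (hp : 1 ≤ p) {k : ι → X → ℝ} {K : ℝ≥0∞}
    (hk : ∀ n, AEStronglyMeasurable (k n) μ) (hkK : ∀ n, eLpNorm (k n) p μ ≤ K)
    (hK : K ≠ ∞) {c : ι → ℝ} (hc : Summable c) :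
    MemLp (fun x ↦ ∑' n, c n * k n x) p μ := by
  have hbound (n : ι) : eLpNorm (c n • k n) p μ ≤ ‖c n‖ₑ * K :=
    eLpNorm_const_smul_le.trans (by gcongr; exact hkK n)
  refine MemLp.tsum hp (fun n ↦ MemLp.const_mul ⟨hk n, (hkK n).trans_lt hK.lt_top⟩ (c n)) ?_
  refine ne_top_of_le_ne_top ?_ (ENNReal.tsum_le_tsum hbound)
  rw [ENNReal.tsum_mul_right]
  exact ENNReal.mul_ne_top (tsum_enorm_ne_top_iff_summable_norm.2 hc.norm) hK

theorem memLp_tsum_mul_abs_sub_rpow_neg {r q : ℝ} (hq : 1 ≤ q) (hrq : r * q < 1)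
    {ts : ℕ → ℝ} (hts : ∀ n, ts n ∈ Icc (0:ℝ) 1) {c : ℕ → ℝ} (hc : Summable c) :
    MemLp (fun t ↦ ∑' n, c n * |t - ts n| ^ (-r)) (ENNReal.ofReal q)
      (volume.restrict (Ioc 0 1)) :=
  memLp_tsum_mul_of_eLpNorm_le (ENNReal.one_le_ofReal.mpr hq)
    (fun _ ↦ ((measurable_id.sub_const _).abs.pow_const _).aestronglyMeasurable)
    (fun n ↦ eLpNorm_abs_sub_rpow_neg_le (hts n))
    (memLp_abs_rpow_neg (by linarith) hrq isCompact_Icc).eLpNorm_ne_top hc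

/-- The solution `x_f` of `x' + a x = f`, `x(0) = 0`, by variation of constants. -/
noncomputable def duhamelSolution (a f : ℝ → ℝ) (t : ℝ) : ℝ :=
  ∫ s in (0:ℝ)..t, f s * Real.exp (-∫ r in s..t, a r)

theorem duhamelSolution_eq_exp_mul_integral {a : ℝ → ℝ} (f : ℝ → ℝ) {T : ℝ}
    (ha : IntegrableOn a (Icc 0 T)) {t : ℝ} (ht : t ∈ Icc 0 T) :
    duhamelSolution a f t = Real.exp (-∫ r in (0:ℝ)..t, a r) *
      ∫ s in (0:ℝ)..t, f s * Real.exp (∫ r in (0:ℝ)..s, a r) := by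
  have hint : ∀ s ∈ Icc 0 T, IntervalIntegrable a volume 0 s := fun s hs ↦
    (intervalIntegrable_iff_integrableOn_Icc_of_le hs.1).2
      (ha.mono_set (Icc_subset_Icc_right hs.2))
  rw [duhamelSolution, ← intervalIntegral.integral_const_mul]
  refine intervalIntegral.integral_congr fun s hs ↦ ?_
  rw [uIcc_of_le ht.1] at hs
  rw [← intervalIntegral.integral_interval_sub_left (hint t ht)
    (hint s ⟨hs.1, hs.2.trans ht.2⟩), neg_sub, sub_eq_add_neg, Real.exp_add]
  ring

theorem continuousOn_duhamelSolution {a f : ℝ → ℝ} {T : ℝ} (ha : IntegrableOn a (Icc 0 T))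
    (hf : IntegrableOn f (Icc 0 T)) : ContinuousOn (duhamelSolution a f) (Icc 0 T) := by
  rcases lt_or_ge T 0 with hT | hT
  · simp [Icc_eq_empty_of_lt hT]
  have hA : ContinuousOn (fun t ↦ ∫ r in (0:ℝ)..t, a r) (Icc 0 T) := by
    simpa [uIcc_of_le hT] using
      intervalIntegral.continuousOn_primitive_interval (a := 0) (b := T)
        (by rw [uIcc_of_le hT]; exact ha)
  have hfexp : IntegrableOn (fun s ↦ f s * Real.exp (∫ r in (0:ℝ)..s, a r)) (Icc 0 T) :=
    hf.mul_continuousOn (Real.continuous_exp.comp_continuousOn hA) isCompact_Icc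
  have hP : ContinuousOn (fun t ↦ ∫ s in (0:ℝ)..t, f s * Real.exp (∫ r in (0:ℝ)..s, a r))
      (Icc 0 T) := by
    simpa [uIcc_of_le hT] using
      intervalIntegral.continuousOn_primitive_interval (a := 0) (b := T)
        (by rw [uIcc_of_le hT]; exact hfexp)
  exact ((Real.continuous_exp.comp_continuousOn hA.neg).mul hP).congr fun t ht ↦
    duhamelSolution_eq_exp_mul_integral f ha ht

theorem abs_duhamelSolution_le {a f : ℝ → ℝ} (ha : 0 ≤ a) {t : ℝ} (ht : 0 ≤ t)
    (hf : IntervalIntegrable f volume 0 t) :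
    |duhamelSolution a f t| ≤ ∫ s in (0:ℝ)..t, |f s| := by
  rw [duhamelSolution, ← Real.norm_eq_abs]
  refine intervalIntegral.norm_integral_le_of_norm_le ht (.of_forall fun s hs ↦ ?_) hf.abs
  have hexp : Real.exp (-∫ r in s..t, a r) ≤ 1 := Real.exp_le_one_iff.mpr
    (neg_nonpos.mpr (intervalIntegral.integral_nonneg hs.2 fun r _ ↦ ha r))
  rw [Real.norm_eq_abs, abs_mul, Real.abs_exp]
  exact mul_le_of_le_one_right (abs_nonneg _) hexp

theorem abs_duhamelSolution_le_eLpNorm {a f : ℝ → ℝ} (ha : 0 ≤ a) {q : ℝ≥0∞}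
    (hq : 1 ≤ q) (hf : MemLp f q (volume.restrict (Ioc 0 1))) {t : ℝ}
    (ht : t ∈ Icc (0:ℝ) 1) :
    |duhamelSolution a f t| ≤ (eLpNorm f q (volume.restrict (Ioc 0 1))).toReal := by
  have : IsProbabilityMeasure (volume.restrict (Ioc (0:ℝ) 1)) := ⟨by simp⟩
  have hf1 : IntegrableOn f (Ioc 0 1) := memLp_one_iff_integrable.mp (hf.mono_exponent hq)
  calc |duhamelSolution a f t|
      ≤ ∫ s in (0:ℝ)..t, |f s| :=
        abs_duhamelSolution_le ha ht.1 ((intervalIntegrable_iff_integrableOn_Ioc_of_le ht.1).2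
          (hf1.mono_set (Ioc_subset_Ioc_right ht.2)))
    _ ≤ ∫ s in Ioc 0 1, |f s| := by
        rw [intervalIntegral.integral_of_le ht.1]
        exact setIntegral_mono_set hf1.abs (.of_forall fun s ↦ abs_nonneg _)
          (Ioc_subset_Ioc_right ht.2).eventuallyLE
    _ ≤ (eLpNorm f q (volume.restrict (Ioc 0 1))).toReal :=
        integral_norm_le_toReal_eLpNorm hq hf

theorem memLp_top_duhamelSolution {a f : ℝ → ℝ} (ha : 0 ≤ a)
    (ha_int : IntegrableOn a (Icc 0 1)) {q : ℝ≥0∞} (hq : 1 ≤ q)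
    (hf : MemLp f q (volume.restrict (Ioc 0 1))) :
    MemLp (duhamelSolution a f) ∞ (volume.restrict (Ioc 0 1)) :=
  memLp_top_of_bound
    (((continuousOn_duhamelSolution ha_int (hf.integrableOn_Icc hq)).mono
      Ioc_subset_Icc_self).aestronglyMeasurable measurableSet_Ioc) _
    ((ae_restrict_iff' measurableSet_Ioc).2 (.of_forall fun _t ht ↦
      abs_duhamelSolution_le_eLpNorm ha hq hf (Ioc_subset_Icc_self ht)))

theorem scalar_example_maximal_Lq_regularity_general
    (p : ℝ)
    (ts : ℕ → ℝ) (hts : ∀ n, ts n ∈ Icc (0:ℝ) 1)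
    (c : ℕ → ℝ) (hc : ∀ n, 0 < c n) (hcsum : Summable c)
    (a : ℝ → ℝ) (ha : ∀ t, a t = 1 + ∑' n, c n * |t - ts n| ^ (-(1/p)))
    (q : ℝ) (hq1 : 1 ≤ q) (hqp : q < p) :
    ∃ C : ℝ, 0 < C ∧
      ∀ f : ℝ → ℝ, MemLp f (ENNReal.ofReal q) (volume.restrict (Ioc (0:ℝ) 1)) →
        -- pointwise bound `|a(t) x_f(t)| ≤ C a(t) ‖f‖_{L_q(0,1)}` on `[0,1]` …
        (∀ t ∈ Icc (0:ℝ) 1,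
          |a t * ∫ s in (0:ℝ)..t, f s * Real.exp (-∫ r in s..t, a r)|
            ≤ C * a t *
              (eLpNorm f (ENNReal.ofReal q) (volume.restrict (Ioc (0:ℝ) 1))).toReal) ∧
        -- … hence `a · x_f ∈ L_q(0,1)`: maximal `L_q`-regularity
        MemLp (fun t => a t * ∫ s in (0:ℝ)..t, f s * Real.exp (-∫ r in s..t, a r))
          (ENNReal.ofReal q) (volume.restrict (Ioc (0:ℝ) 1)) := by
  have hq : 1 ≤ ENNReal.ofReal q := ENNReal.one_le_ofReal.mpr hq1
  have ha_nonneg : 0 ≤ a := fun t ↦ by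
    rw [Pi.zero_apply, ha t]
    exact add_nonneg zero_le_one
      (tsum_nonneg fun n ↦ mul_nonneg (hc n).le (Real.rpow_nonneg (abs_nonneg _) _))
  have hmem_a : MemLp a (ENNReal.ofReal q) (volume.restrict (Ioc 0 1)) := by
    have hqp' : 1 / p * q < 1 := by rwa [one_div_mul_eq_div, div_lt_one (by linarith)]
    rw [show a = (fun _ ↦ 1) + fun t ↦ ∑' n, c n * |t - ts n| ^ (-(1/p)) from funext ha]
    exact (memLp_const (1:ℝ)).add (memLp_tsum_mul_abs_sub_rpow_neg hq1 hqp' hts hcsum)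
  refine ⟨1, one_pos, fun f hf ↦ ⟨fun t ht ↦ ?_, ?_⟩⟩
  · rw [abs_mul, abs_of_nonneg (ha_nonneg t), one_mul]
    exact mul_le_mul_of_nonneg_left (abs_duhamelSolution_le_eLpNorm ha_nonneg hq hf ht)
      (ha_nonneg t)
  · exact (memLp_top_duhamelSolution ha_nonneg (hmem_a.integrableOn_Icc hq) hq hf).mul' hmem_a

/-- **Maximal `L_q`-regularity, `1 ≤ q < p`, of `x' + a x = f`, `x(0) = 0`.** -/
theorem scalar_example_maximal_Lq_regularity
    (p : ℝ) (hp : 1 < p)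
    (ts : ℕ → ℝ) (hts : ∀ n, ts n ∈ Icc (0:ℝ) 1)
    (htsdense : Icc (0:ℝ) 1 ⊆ closure (Set.range ts))
    (c : ℕ → ℝ) (hc : ∀ n, 0 < c n) (hcsum : Summable c)
    (a : ℝ → ℝ) (ha : ∀ t, a t = 1 + ∑' n, c n * |t - ts n| ^ (-(1/p)))
    (q : ℝ) (hq1 : 1 ≤ q) (hqp : q < p) :
    ∃ C : ℝ, 0 < C ∧
      ∀ f : ℝ → ℝ, MemLp f (ENNReal.ofReal q) (volume.restrict (Ioc (0:ℝ) 1)) →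
        -- pointwise bound `|a(t) x_f(t)| ≤ C a(t) ‖f‖_{L_q(0,1)}` on `[0,1]` …
        (∀ t ∈ Icc (0:ℝ) 1,
          |a t * ∫ s in (0:ℝ)..t, f s * Real.exp (-∫ r in s..t, a r)|
            ≤ C * a t *
              (eLpNorm f (ENNReal.ofReal q) (volume.restrict (Ioc (0:ℝ) 1))).toReal) ∧
        -- … hence `a · x_f ∈ L_q(0,1)`: maximal `L_q`-regularity
        MemLp (fun t => a t * ∫ s in (0:ℝ)..t, f s * Real.exp (-∫ r in s..t, a r))
          (ENNReal.ofReal q) (volume.restrict (Ioc (0:ℝ) 1)) :=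
  scalar_example_maximal_Lq_regularity_general p ts hts c hc hcsum a ha q hq1 hqp
end
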